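/- Identify the plane ℝ² with ℂ. Let v ∈ ℂ, ω₀ > 0, k_P > 0, k_I > 0. Let θ, p, ω_I : ℝ → ℝ × ℂ × ℝ be differentiable and satisfy the closed-loop integral-controlled dynamics: θ' = ω₀ + u, p' = e^{iθ} v, ω_I' = u, where u(t) = ω_P(t) − k_I ω_I(t) and ω_P(t) = k_P · Re( e^{−iθ(t)} ( ω₀ (p(t) − p_r(t)) − i e^{iθ_r(t)} ) ), with a reference θ_r' = ω₀, p_r' = e^{iθ_r} whose constant circle center is c_r = p_r + (i/ω₀)e^{iθ_r}. Define the rotating-frame variable x(t) = e^{−iθ(t)} ( c(t) − c_r ), where c(t) = p(t) + (i/ω₀)e^{iθ(t)} v. Then x and ω_I satisfy the reduced system: x'(t) = −(v/ω₀)·u(t) − i·(ω₀ + u(t))·x(t) and ω_I'(t) = u(t), where u(t) = k_P ω₀ Re(x(t)) + k_P Im(v) − k_I ω_I(t). -/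

import Mathlib

/-!
The turning centre `c = p + (i/ω₀) e^{iθ} v` moves with velocity `e^{iθ} v (ω₀ - θ')/ω₀`, so the
reference centre `c_r` is constant and `c' = -(v/ω₀) e^{iθ} u`. Differentiating
`x = e^{-iθ} (c - c_r)` by the product rule then gives the reduced dynamics, and expanding
`ω₀ x` shows that the controller's proportional term equals `k_P ω₀ Re x + k_P Im v`.
-/

open Complex

/-- Centre of the circle traced by a vehicle at heading `θ` and position `p` that moves with
body-frame velocity `v` and turns at the constant rate `ω₀`. -/
noncomputable def turningCenter (ω₀ θ : ℝ) (p v : ℂ) : ℂ :=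
  p + (I / ω₀) * cexp (θ * I) * v

variable {θ : ℝ → ℝ} {w t : ℝ}

theorem hasDerivAt_exp_ofReal_mul_I (hθ : HasDerivAt θ w t) :
    HasDerivAt (fun s => cexp (θ s * I)) (cexp (θ t * I) * (w * I)) t :=
  (hθ.ofReal_comp.mul_const I).cexp

theorem hasDerivAt_exp_neg_ofReal_mul_I (hθ : HasDerivAt θ w t) :
    HasDerivAt (fun s => cexp (-θ s * I)) (cexp (-θ t * I) * (-w * I)) t := by
  simpa using hasDerivAt_exp_ofReal_mul_I hθ.neg

theorem hasDerivAt_turningCenter {ω₀ : ℝ} (hω₀ : ω₀ ≠ 0) {p : ℝ → ℂ} {v : ℂ}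
    (hθ : HasDerivAt θ w t) (hp : HasDerivAt p (cexp (θ t * I) * v) t) :
    HasDerivAt (fun s => turningCenter ω₀ (θ s) (p s) v)
      (cexp (θ t * I) * v * ((ω₀ - w) / ω₀)) t := by
  have hω₀' : (ω₀ : ℂ) ≠ 0 := ofReal_ne_zero.mpr hω₀
  have hrot := (hasDerivAt_exp_ofReal_mul_I hθ).const_mul (I / ω₀)
  refine (hp.add (hrot.mul_const v)).congr_deriv ?_
  linear_combination (cexp (θ t * I) * v * w / ω₀) * I_sq -
    (cexp (θ t * I) * v) * mul_inv_cancel₀ hω₀'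

theorem hasDerivAt_rotatingFrame {y : ℝ → ℂ} {y' : ℂ} (hθ : HasDerivAt θ w t)
    (hy : HasDerivAt y y' t) :
    HasDerivAt (fun s => cexp (-θ s * I) * y s)
      (cexp (-θ t * I) * y' - I * w * (cexp (-θ t * I) * y t)) t :=
  ((hasDerivAt_exp_neg_ofReal_mul_I hθ).mul hy).congr_deriv (by ring)

theorem exp_neg_ofReal_mul_I_mul_exp (φ : ℝ) : cexp (-φ * I) * cexp (φ * I) = 1 := by
  rw [← Complex.exp_add]; simp

theorem ofReal_mul_rotatingFrame_turningCenter {ω₀ : ℝ} (hω₀ : ω₀ ≠ 0) (φ φr : ℝ) (p pr v : ℂ) :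
    ω₀ * (cexp (-φ * I) * (turningCenter ω₀ φ p v - turningCenter ω₀ φr pr 1)) =
      cexp (-φ * I) * (ω₀ * (p - pr) - I * cexp (φr * I)) + I * v := by
  have hω₀' : (ω₀ : ℂ) ≠ 0 := ofReal_ne_zero.mpr hω₀
  unfold turningCenter
  linear_combination (I * v) * exp_neg_ofReal_mul_I_mul_exp φ +
    (cexp (-φ * I) * I * (cexp (φ * I) * v - cexp (φr * I))) * mul_inv_cancel₀ hω₀'

theorem rotating_frame_reduction_general
    (v : ℂ) (ω₀ kP kI : ℝ) (hω₀ : 0 < ω₀)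
    (θ θr : ℝ → ℝ) (p pr : ℝ → ℂ) (ωI : ℝ → ℝ)
    (ωP u : ℝ → ℝ)
    (hωP : ∀ t, ωP t = kP * (Complex.exp (-θ t * Complex.I) *
        (ω₀ * (p t - pr t) - Complex.I * Complex.exp (θr t * Complex.I))).re)
    (hu : ∀ t, u t = ωP t - kI * ωI t)
    (hθr : ∀ t, HasDerivAt θr ω₀ t)
    (hpr : ∀ t, HasDerivAt pr (Complex.exp (θr t * Complex.I)) t)
    (hθ : ∀ t, HasDerivAt θ (ω₀ + u t) t)
    (hp : ∀ t, HasDerivAt p (Complex.exp (θ t * Complex.I) * v) t)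
    (c cr : ℝ → ℂ)
    (hc : ∀ t, c t = p t + (Complex.I / ω₀) * Complex.exp (θ t * Complex.I) * v)
    (hcr : ∀ t, cr t = pr t + (Complex.I / ω₀) * Complex.exp (θr t * Complex.I))
    (x : ℝ → ℂ)
    (hx : ∀ t, x t = Complex.exp (-θ t * Complex.I) * (c t - cr t)) :
    ∀ t, HasDerivAt x (-(v / ω₀) * u t - Complex.I * (ω₀ + u t) * x t) t ∧
      u t = kP * ω₀ * (x t).re + kP * v.im - kI * ωI t := by
  have hω₀' : ω₀ ≠ 0 := hω₀.ne'
  have hx_eq (s : ℝ) : x s = cexp (-θ s * I) *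
      (turningCenter ω₀ (θ s) (p s) v - turningCenter ω₀ (θr s) (pr s) 1) := by
    rw [hx, hc, hcr, turningCenter, turningCenter, mul_one]
  intro t
  constructor
  · have hc' := hasDerivAt_turningCenter hω₀' (hθ t) (hp t)
    have hcr' := hasDerivAt_turningCenter (v := 1) hω₀' (hθr t) (by rw [mul_one]; exact hpr t)
    refine ((hasDerivAt_rotatingFrame (hθ t) (hc'.sub hcr')).congr_of_eventuallyEq
      (.of_forall hx_eq)).congr_deriv ?_
    rw [Pi.sub_apply, ← hx_eq t, sub_self, zero_div, mul_zero, sub_zero]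
    push_cast
    linear_combination (-(v * u t / ω₀)) * exp_neg_ofReal_mul_I_mul_exp (θ t)
  · have hre := congrArg re
      (ofReal_mul_rotatingFrame_turningCenter hω₀' (θ t) (θr t) (p t) (pr t) v)
    rw [← hx_eq, re_ofReal_mul, add_re, I_mul_re] at hre
    rw [hu, hωP]
    linear_combination (-kP) * hre

/-- rotating-frame reduction of the steering-controlled vehicle
under the adapted integral controller (proof of Proposition 4). -/
theorem rotating_frame_reduction
    (v : ℂ) (ω₀ kP kI : ℝ) (hω₀ : 0 < ω₀) (hkP : 0 < kP) (hkI : 0 < kI)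
    (θ θr : ℝ → ℝ) (p pr : ℝ → ℂ) (ωI : ℝ → ℝ)
    (ωP u : ℝ → ℝ)
    (hωP : ∀ t, ωP t = kP * (Complex.exp (-θ t * Complex.I) *
        (ω₀ * (p t - pr t) - Complex.I * Complex.exp (θr t * Complex.I))).re)
    (hu : ∀ t, u t = ωP t - kI * ωI t)
    (hθr : ∀ t, HasDerivAt θr ω₀ t)
    (hpr : ∀ t, HasDerivAt pr (Complex.exp (θr t * Complex.I)) t)
    (hθ : ∀ t, HasDerivAt θ (ω₀ + u t) t)
    (hp : ∀ t, HasDerivAt p (Complex.exp (θ t * Complex.I) * v) t)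
    (hωI : ∀ t, HasDerivAt ωI (u t) t)
    (c cr : ℝ → ℂ)
    (hc : ∀ t, c t = p t + (Complex.I / ω₀) * Complex.exp (θ t * Complex.I) * v)
    (hcr : ∀ t, cr t = pr t + (Complex.I / ω₀) * Complex.exp (θr t * Complex.I))
    (x : ℝ → ℂ)
    (hx : ∀ t, x t = Complex.exp (-θ t * Complex.I) * (c t - cr t)) :
    ∀ t, HasDerivAt x (-(v / ω₀) * u t - Complex.I * (ω₀ + u t) * x t) t ∧
      u t = kP * ω₀ * (x t).re + kP * v.im - kI * ωI t :=
  rotating_frame_reduction_general v ω₀ kP kI hω₀ θ θr p pr ωI ωP u hωP hu hθr hpr hθ hp c cr hc hcr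
    x hx
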